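/- The L vectors E₂₁^{(l)}φ, l = 1,…,L, are linearly independent, where φ = (|0…0⟩+|1…1⟩) + Σ_{l=2}^{L} (|0…0⟩ with qubits 1 and l excited + its global bit-flip), L ≥ 5, and E₂₁^{(l)} applies the lowering matrix E₂₁ = [[0,0],[1,0]] to the l-th qubit and identity elsewhere. -/

import Mathlib

open Matrix BigOperators

/-- Operator acting as the 2×2 matrix `A` on the `l`-th qubit and as identity elsewhere. -/
noncomputable def tensorFactorOp (L : ℕ) (A : Matrix (Fin 2) (Fin 2) ℂ) (l : Fin L) :
    Matrix (Fin L → Fin 2) (Fin L → Fin 2) ℂ :=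
  fun s t => A (s l) (t l) * (if ∀ m, m ≠ l → s m = t m then 1 else 0)

/-- The lowering matrix `E₂₁ = [[0,0],[1,0]]`. -/
def E21 : Matrix (Fin 2) (Fin 2) ℂ := Matrix.of ![![0, 0], ![1, 0]]

/-- Basis state with qubits `1` and `l` excited and all others in the ground state. -/
def uPat (L : ℕ) [NeZero L] (l : Fin L) : Fin L → Fin 2 :=
  fun m => if m = 0 ∨ m = l then 1 else 0

/-- The stable state
`φ = (|0…0⟩+|1…1⟩) + Σ_{l=2}^{L} (|1 0…0 1_l 0…0⟩ + |0 1…1 0_l 1…1⟩)`. -/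
noncomputable def stablePhi (L : ℕ) [NeZero L] : (Fin L → Fin 2) → ℂ :=
  fun s => (if s = (fun _ => 0) then 1 else 0) + (if s = (fun _ => 1) then 1 else 0)
    + ∑ l ∈ Finset.univ.erase 0,
        ((if s = uPat L l then 1 else 0)
          + (if s = (fun m => 1 - uPat L l m) then 1 else 0))


/-!
Since `E₂₁` sends `|0⟩` to `|1⟩`, the amplitude of `E₂₁^{(m)} φ` at a configuration `s` with
`s m = 1` is that of `φ` at `s` with qubit `m` reset to `0`, and it vanishes when `s m = 0`.
At the one-excitation states `|e_l⟩` this gives `δ_{ml}` times the amplitude of `φ` at `|0…0⟩`,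
which is `1` once `L ≥ 3` (no other term of `φ` is the ground state). The amplitudes at the
`|e_l⟩` thus form the identity matrix, which forces linear independence.
-/

theorem linearIndependent_of_apply_eq_ite {ι α R : Type*} [Fintype ι] [DecidableEq ι]
    [Ring R] (v : ι → α → R) (x : ι → α)
    (hv : ∀ i j, v i (x j) = if i = j then 1 else 0) : LinearIndependent R v := by
  rw [Fintype.linearIndependent_iff]
  intro c hc j
  simpa [hv] using congrFun hc (x j)

theorem E21_apply (i j : Fin 2) : E21 i j = if i = 1 ∧ j = 0 then 1 else 0 := by
  fin_cases i <;> fin_cases j <;> simp [E21]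

theorem tensorFactorOp_E21_mulVec_apply {L : ℕ} (m : Fin L) (v : (Fin L → Fin 2) → ℂ)
    (s : Fin L → Fin 2) :
    (tensorFactorOp L E21 m *ᵥ v) s = if s m = 1 then v (Function.update s m 0) else 0 := by
  simp only [mulVec, dotProduct, tensorFactorOp, E21_apply]
  split_ifs with hs
  · rw [Fintype.sum_eq_single (Function.update s m 0)]
    · have hoff : ∀ k, k ≠ m → s k = Function.update s m 0 k :=
        fun k hk => (Function.update_of_ne hk _ _).symm
      rw [if_pos ⟨hs, Function.update_self ..⟩, if_pos hoff, one_mul, one_mul]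
    · intro t ht
      suffices ¬ (t m = 0 ∧ ∀ k, k ≠ m → s k = t k) by aesop
      rintro ⟨htm, hst⟩
      exact ht (funext fun k => by by_cases hk : k = m <;> simp_all [Function.update_of_ne])
  · simp [hs]

theorem exists_ne_zero_ne {L : ℕ} [NeZero L] (hL : 3 ≤ L) (l : Fin L) :
    ∃ k : Fin L, k ≠ 0 ∧ k ≠ l := by
  by_contra! h
  have hsub : (Finset.univ : Finset (Fin L)) ⊆ {0, l} := fun k _ => by
    by_cases hk : k = 0
    · simp [hk]
    · simp [h k hk]
  have := (Finset.card_le_card hsub).trans Finset.card_le_two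
  simp at this
  omega

theorem stablePhi_zero {L : ℕ} [NeZero L] (hL : 3 ≤ L) : stablePhi L 0 = 1 := by
  have hone : (0 : Fin L → Fin 2) ≠ fun _ => 1 := fun h => by simpa using congrFun h 0
  have hpair (l : Fin L) (hl : l ≠ 0) :
      (0 : Fin L → Fin 2) ≠ uPat L l ∧ (0 : Fin L → Fin 2) ≠ fun m => 1 - uPat L l m := by
    obtain ⟨k, hk0, hkl⟩ := exists_ne_zero_ne hL l
    exact ⟨fun h => by simpa [uPat] using congrFun h 0,
      fun h => by simpa [uPat, hk0, hkl] using congrFun h k⟩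
  rw [stablePhi, Finset.sum_eq_zero fun l hl => ?_]
  · simp [hone, ← Pi.zero_def]
  · simp [hpair l (Finset.ne_of_mem_erase hl)]

theorem tensorFactorOp_E21_mulVec_stablePhi_single {L : ℕ} [NeZero L] (hL : 3 ≤ L)
    (m l : Fin L) :
    (tensorFactorOp L E21 m *ᵥ stablePhi L) (Pi.single l 1) = if m = l then 1 else 0 := by
  rw [tensorFactorOp_E21_mulVec_apply]
  by_cases hml : m = l
  · subst hml
    have hreset : Function.update (Pi.single m 1) m 0 = (0 : Fin L → Fin 2) := by
      simp [Pi.single, Function.update_idem]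
    simp [hreset, stablePhi_zero hL]
  · simp [hml]

/-- For `L ≥ 5` the `L` vectors `E₂₁^{(l)}φ` are linearly independent. -/
theorem stmt11 (L : ℕ) [NeZero L] (hL : 5 ≤ L) :
    LinearIndependent ℂ
      (fun l : Fin L => (tensorFactorOp L E21 l).mulVec (stablePhi L)) :=
  linearIndependent_of_apply_eq_ite _ (fun l => Pi.single l 1)
    (tensorFactorOp_E21_mulVec_stablePhi_single (by omega))
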